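/- The set of strings over Σ that are not uniquely decodable from their bigrams is a two-sided ideal under concatenation: if u is not UD then for all strings v, w ∈ Σ*, the string vuw is not UD. -/

import Mathlib

/-!
Concatenating `x` and `y` trades the bigrams `(last x, $)` and `($, first y)` for the bridge
`(last x, first y)`, so `Phi (x ++ y)` is determined by `Phi x`, `Phi y` and the letters meeting at
the junction. Those letters are read off the encoding itself: the first letter of `u` is the
unique bigram leaving the delimiter and the last letter the unique one entering it. Hence a witness
`u' ≠ u` with `Phi u' = Phi u` yields `v ++ u' ++ w ≠ v ++ u ++ w` with the same encoding.
-/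

/-- The multiset of bigrams (length-2 contiguous substrings) of a list. -/
def bigrams {β : Type*} (l : List β) : Multiset (β × β) :=
  (l.zip l.tail : List (β × β))

/-- The delimited form `$w$` of a string `w` over `α`, with `none` as the delimiter. -/
def delim {α : Type*} (w : List α) : List (Option α) :=
  none :: (w.map some ++ [none])

/-- The bigram encoding of a string: the multiset of bigrams of its delimited form. -/
def Phi {α : Type*} (w : List α) : Multiset (Option α × Option α) :=
  bigrams (delim w)

/-- A string is uniquely decodable if it is the only string with its bigram encoding. -/
def UD {α : Type*} (w : List α) : Prop :=
  ∀ w' : List α, Phi w' = Phi w → w' = w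

section Bigrams

variable {β : Type*}

@[simp]
lemma bigrams_nil : bigrams ([] : List β) = 0 := rfl

@[simp]
lemma bigrams_singleton (a : β) : bigrams [a] = 0 := rfl

@[simp]
lemma bigrams_cons_cons (a b : β) (l : List β) :
    bigrams (a :: b :: l) = (a, b) ::ₘ bigrams (b :: l) := rfl

lemma bigrams_append_cons (l : List β) (a : β) (r : List β) :
    bigrams (l ++ a :: r) = bigrams (l ++ [a]) + bigrams (a :: r) := by
  induction l with
  | nil => simp
  | cons b l ih =>
    cases l with
    | nil => simp [Multiset.singleton_add]
    | cons c l => simpa using ih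

lemma bigrams_append_singleton_append_cons (l : List β) (a b : β) (r : List β) :
    bigrams (l ++ [a] ++ b :: r) = bigrams (l ++ [a]) + (a, b) ::ₘ bigrams (b :: r) := by
  rw [List.append_assoc, List.singleton_append, bigrams_append_cons, bigrams_cons_cons]

lemma fst_mem_dropLast_of_mem_bigrams : ∀ {l : List β} {p : β × β},
    p ∈ bigrams l → p.1 ∈ l.dropLast
  | [], _, h | [_], _, h => by simp at h
  | a :: b :: l, p, h => by
    rcases Multiset.mem_cons.1 (bigrams_cons_cons a b l ▸ h) with rfl | h
    · simp
    · simpa using Or.inr (fst_mem_dropLast_of_mem_bigrams h)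

lemma snd_mem_tail_of_mem_bigrams {l : List β} {p : β × β} (h : p ∈ bigrams l) :
    p.2 ∈ l.tail :=
  (List.of_mem_zip (l₁ := l) h).2

end Bigrams

section Phi

variable {α : Type*}

lemma exists_cons_none_map_some_eq (x : List α) :
    ∃ l, none :: x.map some = l ++ [x.getLast?] := by
  rcases x.eq_nil_or_concat with rfl | ⟨x, a, rfl⟩
  · exact ⟨[], rfl⟩
  · exact ⟨none :: x.map some, by simp⟩

lemma exists_map_some_append_none_eq (y : List α) :
    ∃ l, y.map some ++ [none] = y.head? :: l := by
  cases y with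
  | nil => exact ⟨[], rfl⟩
  | cons a y => exact ⟨y.map some ++ [none], rfl⟩

lemma Phi_eq_cons (u : List α) :
    Phi u = (none, u.head?) ::ₘ bigrams (u.map some ++ [none]) := by
  obtain ⟨l, hl⟩ := exists_map_some_append_none_eq u
  rw [Phi, delim, hl, bigrams_cons_cons]

lemma Phi_eq_add (u : List α) :
    Phi u = bigrams (none :: u.map some) + {(u.getLast?, none)} := by
  obtain ⟨l, hl⟩ := exists_cons_none_map_some_eq u
  rw [Phi, delim, ← List.cons_append, hl, bigrams_append_singleton_append_cons, ← hl]
  rfl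

lemma Phi_append (x y : List α) :
    Phi (x ++ y) + {(x.getLast?, none), (none, y.head?)} =
      Phi x + Phi y + {(x.getLast?, y.head?)} := by
  obtain ⟨l, hl⟩ := exists_cons_none_map_some_eq x
  obtain ⟨r, hr⟩ := exists_map_some_append_none_eq y
  have hxy : Phi (x ++ y) =
      bigrams (none :: x.map some) + (x.getLast?, y.head?) ::ₘ bigrams (y.map some ++ [none]) := by
    rw [Phi, delim, List.map_append, List.append_assoc, ← List.cons_append, hl, hr,
      bigrams_append_singleton_append_cons]
  rw [hxy, Phi_eq_add x, Phi_eq_cons y]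
  simp only [Multiset.insert_eq_cons, ← Multiset.singleton_add]
  abel

lemma snd_eq_head?_of_mem_Phi {u : List α} {p : Option α × Option α} (hp : p ∈ Phi u)
    (hnone : p.1 = none) : p.2 = u.head? := by
  rw [Phi_eq_cons] at hp
  rcases Multiset.mem_cons.1 hp with rfl | hp
  · rfl
  · have := fst_mem_dropLast_of_mem_bigrams hp
    simp [hnone] at this

lemma fst_eq_getLast?_of_mem_Phi {u : List α} {p : Option α × Option α} (hp : p ∈ Phi u)
    (hnone : p.2 = none) : p.1 = u.getLast? := by
  rw [Phi_eq_add] at hp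
  rcases Multiset.mem_add.1 hp with hp | hp
  · have := snd_mem_tail_of_mem_bigrams hp
    simp [hnone] at this
  · rw [Multiset.mem_singleton.1 hp]

lemma head?_eq_of_Phi_eq {u u' : List α} (h : Phi u' = Phi u) : u'.head? = u.head? :=
  snd_eq_head?_of_mem_Phi (p := (none, u'.head?))
    (h ▸ Phi_eq_cons u' ▸ Multiset.mem_cons_self _ _) rfl

lemma getLast?_eq_of_Phi_eq {u u' : List α} (h : Phi u' = Phi u) : u'.getLast? = u.getLast? :=
  fst_eq_getLast?_of_mem_Phi (p := (u'.getLast?, none))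
    (h ▸ Phi_eq_add u' ▸ Multiset.mem_add.2 (Or.inr (Multiset.mem_singleton_self _))) rfl

lemma Phi_append_left {y y' : List α} (h : Phi y' = Phi y) (x : List α) :
    Phi (x ++ y') = Phi (x ++ y) := by
  have := Phi_append x y'
  rw [h, head?_eq_of_Phi_eq h, ← Phi_append x y] at this
  exact add_right_cancel this

lemma Phi_append_right {x x' : List α} (h : Phi x' = Phi x) (y : List α) :
    Phi (x' ++ y) = Phi (x ++ y) := by
  have := Phi_append x' y
  rw [h, getLast?_eq_of_Phi_eq h, ← Phi_append x y] at this
  exact add_right_cancel this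

end Phi

theorem not_UD_two_sided_ideal_general {α : Type*} (u : List α) (h : ¬ UD u) :
    ∀ v w : List α, ¬ UD (v ++ u ++ w) := by
  intro v w hUD
  obtain ⟨u', hΦ, hne⟩ : ∃ u', Phi u' = Phi u ∧ u' ≠ u := by simpa [UD] using h
  have := hUD (v ++ u' ++ w) (Phi_append_right (Phi_append_left hΦ v) w)
  exact hne (List.append_cancel_left (List.append_cancel_right this))

theorem not_UD_two_sided_ideal {α : Type*} [Fintype α] (u : List α) (h : ¬ UD u) :
    ∀ v w : List α, ¬ UD (v ++ u ++ w) :=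
  not_UD_two_sided_ideal_general u h
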